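/- Let N, d ≥ 1, let ν_I : (ZMod N)^I → ℝ for I ⊊ {1,…,d} be nonnegative weights with ∏_{I ⊊ {1,…,d}} ν_I(x_I) > 0 for every x ∈ Ω, let ν_{[d]} : (ZMod N)^d → ℝ be nonnegative, and let Ω ⊆ (ZMod N)^d have face structure. Assume that ⟨f, Df⟩_ν > 0 for every f ∈ F_T that is not identically zero. Then for every f ∈ F_T, the dual BAC-norm ‖f‖*_BAC := max{ |⟨f,φ⟩_ν| : φ ∈ F_T, ‖φ‖_BAC ≤ 1 } equals inf{ Σ_{i=1}^k |λ_i| : k ∈ ℕ, λ_i ∈ ℝ, g_i ∈ S_T, f = Σ_{i=1}^k λ_i Dg_i }. -/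

import Mathlib

noncomputable section
open Finset

/-- `P_ω(x,y)`: the point whose `i`-th coordinate is `x i` if `ω i = false` and `y i` otherwise. -/
def proj {ι : Type*} {N : ℕ} (ω : ι → Bool) (x y : ι → ZMod N) : ι → ZMod N :=
  fun i => if ω i then y i else x i

/-- `P_{ω_I}(x_I, y_I)` as a function on the subtype `↥I`. -/
def projI {ι : Type*} {N : ℕ} {I : Finset ι} (ω : I → Bool) (x y : ι → ZMod N) :
    I → ZMod N :=
  fun i => if ω i then y i.1 else x i.1

/-- The weighted inner product `⟨f,g⟩_ν`. -/
def wInner {ι : Type*} [Fintype ι] [DecidableEq ι] {N : ℕ} [NeZero N]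
    (ν : (I : Finset ι) → (I → ZMod N) → ℝ) (f g : (ι → ZMod N) → ℝ) : ℝ :=
  Finset.expect Finset.univ fun x : ι → ZMod N =>
    f x * g x * ∏ I ∈ univ.filter (fun I : Finset ι => I ≠ univ), ν I (fun i => x i.1)

/-- The dual function `Df`. -/
def dualFn {ι : Type*} [Fintype ι] [DecidableEq ι] {N : ℕ} [NeZero N]
    (ν : (I : Finset ι) → (I → ZMod N) → ℝ) (f : (ι → ZMod N) → ℝ)
    (x : ι → ZMod N) : ℝ :=
  Finset.expect Finset.univ fun y : ι → ZMod N =>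
    (∏ ω ∈ univ.filter (fun ω : ι → Bool => ω ≠ fun _ => false), f (proj ω x y)) *
      ∏ I ∈ univ.filter (fun I : Finset ι => I ≠ univ),
        ∏ ω ∈ univ.filter (fun ω : I → Bool => ω ≠ fun _ => false), ν I (projI ω x y)

/-- A set `Ω` has face structure if it is the intersection of sets `Ω_J` over `∅ ≠ J ⊊ ι`,
where membership in `Ω_J` depends only on the coordinates outside of `J`. -/
def HasFaceStructure {ι : Type*} [Fintype ι] [DecidableEq ι] {N : ℕ}
    (Ω : Set (ι → ZMod N)) : Prop :=
  ∃ ΩJ : Finset ι → Set (ι → ZMod N),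
    (∀ J : Finset ι, J ≠ ∅ → J ≠ univ →
      ∀ x y : ι → ZMod N, (∀ i, i ∉ J → x i = y i) → (x ∈ ΩJ J → y ∈ ΩJ J)) ∧
    Ω = ⋂ J ∈ {J : Finset ι | J ≠ ∅ ∧ J ≠ univ}, ΩJ J

/-- `F_T`: functions supported on `Ω`. -/
def FT {ι : Type*} {N : ℕ} (Ω : Set (ι → ZMod N)) : Set ((ι → ZMod N) → ℝ) :=
  {f | ∀ x, x ∉ Ω → f x = 0}

/-- `S_T`: functions supported on `Ω` and dominated by `ν_{[d]} + 2`. -/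
def STset {ι : Type*} {N : ℕ} (Ω : Set (ι → ZMod N)) (νd : (ι → ZMod N) → ℝ) :
    Set ((ι → ZMod N) → ℝ) :=
  {f | f ∈ FT Ω ∧ ∀ x, |f x| ≤ νd x + 2}

/-- The basic anti-correlation norm `‖f‖_BAC = max_{g ∈ S_T} |⟨f, Dg⟩_ν|`. -/
def BACnorm {ι : Type*} [Fintype ι] [DecidableEq ι] {N : ℕ} [NeZero N]
    (ν : (I : Finset ι) → (I → ZMod N) → ℝ) (Ω : Set (ι → ZMod N))
    (νd : (ι → ZMod N) → ℝ) (f : (ι → ZMod N) → ℝ) : ℝ :=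
  sSup ((fun g => |wInner ν f (dualFn ν g)|) '' STset Ω νd)

/-!
The dual functions `D g`, `g ∈ S_T`, form a compact set `K ⊆ F_T` (the face structure of `Ω` makes
`D g` vanish off `Ω`), symmetric because `D` is homogeneous of the odd degree `2^d - 1`; and the
positivity of `⟨u, Du⟩_ν` shows that no nonzero `u ∈ F_T` is `ν`-orthogonal to `K`, so that
`⟨·,·⟩_ν` is nondegenerate on `F_T` and `K` spans `F_T`. The theorem is then the duality between
the gauge of the compact convex set `conv K`, which is the infimum of `Σ |λ_i|`, and the dual norm:
if `f ∉ t • conv K`, Hahn–Banach separation gives a functional which, written as `⟨φ, ·⟩_ν` with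
`φ ∈ F_T`, satisfies `|⟨φ, k⟩_ν| ≤ 1` on `K` and `⟨φ, f⟩_ν > t`.
-/

theorem isCompact_convexHull {E : Type*} [NormedAddCommGroup E] [NormedSpace ℝ E]
    [FiniteDimensional ℝ E] {s : Set E} (hs : IsCompact s) : IsCompact (convexHull ℝ s) := by
  rcases s.eq_empty_or_nonempty with rfl | ⟨x₀, hx₀⟩
  · simp
  set n := Module.finrank ℝ E + 1
  suffices h : convexHull ℝ s = (fun p : (Fin n → ℝ) × (Fin n → E) => ∑ i, p.1 i • p.2 i) ''
      (stdSimplex ℝ (Fin n) ×ˢ Set.univ.pi fun _ => s) by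
    rw [h]
    refine ((isCompact_stdSimplex ℝ _).prod (isCompact_univ_pi fun _ => hs)).image ?_
    fun_prop
  refine subset_antisymm (fun x hx => ?_) ?_
  · -- Carathéodory: `n` points suffice; pad with weight `0` at `x₀`.
    obtain ⟨ι, _, z, w, hzs, hz, hw₀, hw₁, rfl⟩ := eq_pos_convex_span_of_mem_convexHull hx
    obtain ⟨e⟩ : Nonempty (ι ↪ Fin n) := Function.Embedding.nonempty_of_card_le <| by
      simpa [n] using hz.card_le_finrank_succ.trans
        (Nat.succ_le_succ (Submodule.finrank_le _))
    classical
    set w' := Function.extend e w 0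
    set z' := Function.extend e z fun _ => x₀
    have hw' : ∀ i, w' (e i) = w i := e.injective.extend_apply _ _
    have hz' : ∀ i, z' (e i) = z i := e.injective.extend_apply _ _
    have hw'₀ : ∀ j ∉ Set.range e, w' j = 0 := fun j hj => Function.extend_apply' _ _ _ hj
    have hz'₀ : ∀ j ∉ Set.range e, z' j = x₀ := fun j hj => Function.extend_apply' _ _ _ hj
    refine ⟨(w', z'), ⟨⟨fun j => ?_, ?_⟩, fun j _ => ?_⟩, ?_⟩
    · by_cases hj : j ∈ Set.range e
      · obtain ⟨i, rfl⟩ := hj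
        exact (hw' i).ge.trans' (hw₀ i).le
      · exact (hw'₀ j hj).ge
    · rw [← hw₁]
      exact (Fintype.sum_of_injective e e.injective _ _ hw'₀ fun i => (hw' i).symm).symm
    · by_cases hj : j ∈ Set.range e
      · obtain ⟨i, rfl⟩ := hj
        show z' (e i) ∈ s
        exact (hz' i) ▸ hzs (Set.mem_range_self i)
      · show z' j ∈ s
        exact (hz'₀ j hj) ▸ hx₀
    · refine (Fintype.sum_of_injective e e.injective _ _ (fun j hj => ?_) fun i => ?_).symm
      · simp [hw'₀ j hj]
      · simp [hw', hz']
  · rintro _ ⟨⟨w, z⟩, ⟨hw, hz⟩, rfl⟩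
    exact mem_convexHull_of_exists_fintype w z hw.1 hw.2 (fun i => hz i trivial) rfl

open Pointwise

section LinearDuality

variable {E : Type*} [AddCommGroup E] [Module ℝ E] {B : LinearMap.BilinForm ℝ E} {K : Set E}

def atomicCosts (K : Set E) (f : E) : Set ℝ :=
  {r | ∃ (n : ℕ) (c : Fin n → ℝ) (k : Fin n → E),
    (∀ i, k i ∈ K) ∧ f = ∑ i, c i • k i ∧ r = ∑ i, |c i|}

theorem nonneg_of_mem_atomicCosts {f : E} {r : ℝ} (hr : r ∈ atomicCosts K f) : 0 ≤ r := by
  obtain ⟨n, c, k, -, -, rfl⟩ := hr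
  positivity

theorem abs_apply_le_of_mem_atomicCosts {φ f : E} {r : ℝ} (hφ : ∀ k ∈ K, |B φ k| ≤ 1)
    (hr : r ∈ atomicCosts K f) : |B φ f| ≤ r := by
  obtain ⟨n, c, k, hk, rfl, rfl⟩ := hr
  simp only [map_sum, map_smul, smul_eq_mul]
  refine (Finset.abs_sum_le_sum_abs _ _).trans (Finset.sum_le_sum fun i _ => ?_)
  rw [abs_mul]
  exact mul_le_of_le_one_right (abs_nonneg _) (hφ _ (hk i))

theorem atomicCosts_nonempty_of_mem_span {f : E} (hf : f ∈ Submodule.span ℝ K) :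
    (atomicCosts K f).Nonempty := by
  obtain ⟨n, c, k, hfk⟩ := Submodule.mem_span_set'.mp hf
  exact ⟨_, n, c, fun i => k i, fun i => (k i).2, hfk.symm, rfl⟩

theorem exists_mem_atomicCosts_le_of_mem_smul_convexHull {f : E} {t : ℝ} (ht : 0 ≤ t)
    (hf : f ∈ t • convexHull ℝ K) : ∃ r ∈ atomicCosts K f, r ≤ t := by
  obtain ⟨a, ha, rfl⟩ := hf
  obtain ⟨ι, _, w, z, hw₀, hw₁, hz, rfl⟩ := mem_convexHull_iff_exists_fintype.mp ha
  let e := Fintype.equivFin ι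
  refine ⟨_, ⟨_, fun j => t * w (e.symm j), fun j => z (e.symm j), fun j => hz _, ?_, rfl⟩, ?_⟩
  · show t • ∑ i, w i • z i = ∑ j, (t * w (e.symm j)) • z (e.symm j)
    rw [e.symm.sum_comp fun i => (t * w i) • z i, Finset.smul_sum]
    simp only [mul_smul]
  · show ∑ j, |t * w (e.symm j)| ≤ t
    rw [e.symm.sum_comp fun i => |t * w i|]
    simp only [abs_mul, abs_of_nonneg ht, abs_of_nonneg (hw₀ _)]
    rw [← Finset.mul_sum, hw₁, mul_one]

theorem exists_mem_forall_apply_eq [FiniteDimensional ℝ E] {V : Submodule ℝ E}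
    (hB : (B.restrict V).SeparatingLeft) (ℓ : Module.Dual ℝ E) : ∃ ψ ∈ V, ∀ w ∈ V, B ψ w = ℓ w := by
  obtain ⟨ψ, hψ⟩ := (LinearMap.injective_iff_surjective_of_finrank_eq_finrank
    Subspace.dual_finrank_eq.symm).mp
    (LinearMap.ker_eq_bot.mp (LinearMap.separatingLeft_iff_ker_eq_bot.mp hB)) (ℓ ∘ₗ V.subtype)
  exact ⟨ψ, ψ.2, fun w hw => LinearMap.congr_fun hψ ⟨w, hw⟩⟩

theorem separatingLeft_restrict_of_forall_apply_eq_zero {V : Submodule ℝ E} (hKV : K ⊆ V)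
    (hK : ∀ u ∈ V, (∀ k ∈ K, B u k = 0) → u = 0) : (B.restrict V).SeparatingLeft :=
  fun u hu => Subtype.ext <| hK u u.2 fun k hk => hu ⟨k, hKV hk⟩

end LinearDuality

theorem atomicCosts_image {X α : Type*} (D : α → X → ℝ) (S : Set α) (f : X → ℝ) :
    atomicCosts (D '' S) f = {r | ∃ (n : ℕ) (c : Fin n → ℝ) (g : Fin n → α),
      (∀ i, g i ∈ S) ∧ (f = fun x => ∑ i, c i * D (g i) x) ∧ r = ∑ i, |c i|} := by
  have hsum : ∀ {n : ℕ} (c : Fin n → ℝ) (k : Fin n → X → ℝ),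
      ∑ i, c i • k i = fun x => ∑ i, c i * k i x := fun c k => by
    ext x; simp [Finset.sum_apply]
  ext r
  constructor
  · rintro ⟨n, c, k, hk, rfl, rfl⟩
    choose g hgS hgk using hk
    exact ⟨n, c, g, hgS, by simp only [hgk, hsum], rfl⟩
  · rintro ⟨n, c, g, hgS, rfl, rfl⟩
    exact ⟨n, c, fun i => D (g i), fun i => ⟨g i, hgS i, rfl⟩, (hsum c _).symm, rfl⟩

section ConvexDuality

variable {E : Type*} [NormedAddCommGroup E] [NormedSpace ℝ E] [FiniteDimensional ℝ E]
  {B : LinearMap.BilinForm ℝ E} {V : Submodule ℝ E} {K : Set E}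

theorem le_span_of_forall_apply_eq_zero (hKV : K ⊆ V)
    (hK : ∀ u ∈ V, (∀ k ∈ K, B u k = 0) → u = 0) : V ≤ Submodule.span ℝ K := by
  intro v hv
  by_contra hvK
  obtain ⟨ℓ, hℓv, hℓK⟩ := Submodule.exists_dual_map_eq_bot_of_notMem hvK inferInstance
  obtain ⟨ψ, hψV, hψ⟩ :=
    exists_mem_forall_apply_eq (separatingLeft_restrict_of_forall_apply_eq_zero hKV hK) ℓ
  have hψ0 : ψ = 0 := hK ψ hψV fun k hk => (hψ k (hKV hk)).trans <|
    (Submodule.eq_bot_iff _).mp hℓK _ (Submodule.mem_map_of_mem (Submodule.subset_span hk))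
  exact hℓv (by rw [← hψ v hv, hψ0, map_zero, LinearMap.zero_apply])

theorem exists_polar_lt_apply_of_notMem_smul_convexHull (hKV : K ⊆ V) (hKc : IsCompact K)
    (hKne : K.Nonempty) (hKs : ∀ k ∈ K, -k ∈ K) (hB : (B.restrict V).SeparatingLeft)
    {f : E} (hf : f ∈ V) {t : ℝ} (ht : 0 < t) (hft : f ∉ t • convexHull ℝ K) :
    ∃ φ ∈ V, (∀ k ∈ K, |B φ k| ≤ 1) ∧ t < B φ f := by
  -- Separate `f` from `t • convexHull K`, then represent the functional as `B φ` on `V`.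
  obtain ⟨ℓ, u, hℓ, hu⟩ := geometric_hahn_banach_closed_point
    ((convex_convexHull ℝ K).smul t) ((isCompact_convexHull hKc).smul t).isClosed hft
  have hu0 : 0 < u := by
    obtain ⟨k, hk⟩ := hKne
    have h0 := convex_convexHull ℝ K (subset_convexHull ℝ K hk) (subset_convexHull ℝ K (hKs k hk))
      (by norm_num : (0 : ℝ) ≤ 1 / 2) (by norm_num : (0 : ℝ) ≤ 1 / 2) (by norm_num)
    simpa using hℓ 0 ⟨0, by simpa using h0, smul_zero t⟩
  have hℓK : ∀ k ∈ K, |t * ℓ k| < u := fun k hk => by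
    have hℓk := hℓ _ (Set.smul_mem_smul_set (subset_convexHull ℝ K hk))
    have hℓnk := hℓ _ (Set.smul_mem_smul_set (subset_convexHull ℝ K (hKs k hk)))
    simp only [map_smul, map_neg, smul_eq_mul] at hℓk hℓnk
    exact abs_lt.mpr ⟨by linarith, hℓk⟩
  obtain ⟨φ, hφV, hφ⟩ := exists_mem_forall_apply_eq hB ((t / u) • (ℓ : E →ₗ[ℝ] ℝ))
  refine ⟨φ, hφV, fun k hk => ?_, ?_⟩
  · rw [hφ k (hKV hk), LinearMap.smul_apply, smul_eq_mul, div_mul_eq_mul_div, abs_div,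
      abs_of_pos hu0, div_le_one hu0]
    exact (hℓK k hk).le
  · rw [hφ f hf, LinearMap.smul_apply, smul_eq_mul, div_mul_eq_mul_div, lt_div_iff₀ hu0]
    exact mul_lt_mul_of_pos_left hu ht

theorem sSup_polar_eq_sInf_atomicCosts (hKV : K ⊆ V) (hKc : IsCompact K) (hKne : K.Nonempty)
    (hKs : ∀ k ∈ K, -k ∈ K) (hK : ∀ u ∈ V, (∀ k ∈ K, B u k = 0) → u = 0) {f : E} (hf : f ∈ V) :
    sSup {r | ∃ φ ∈ V, (∀ k ∈ K, |B φ k| ≤ 1) ∧ r = |B φ f|} = sInf (atomicCosts K f) := by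
  set L := {r | ∃ φ ∈ V, (∀ k ∈ K, |B φ k| ≤ 1) ∧ r = |B φ f|}
  obtain ⟨r₀, hr₀⟩ := atomicCosts_nonempty_of_mem_span (le_span_of_forall_apply_eq_zero hKV hK hf)
  have hLr₀ : ∀ r ∈ L, r ≤ r₀ := by
    rintro _ ⟨φ, -, hφ, rfl⟩
    exact abs_apply_le_of_mem_atomicCosts hφ hr₀
  have hL₀ : 0 ≤ sSup L := le_csSup ⟨r₀, hLr₀⟩ ⟨0, V.zero_mem, by simp, by simp⟩
  refine le_antisymm (le_csInf ⟨r₀, hr₀⟩ fun r hr => Real.sSup_le ?_ (nonneg_of_mem_atomicCosts hr))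
    (le_of_forall_pos_le_add fun ε hε => ?_)
  · rintro _ ⟨φ, -, hφ, rfl⟩
    exact abs_apply_le_of_mem_atomicCosts hφ hr
  by_cases hfK : f ∈ (sSup L + ε) • convexHull ℝ K
  · obtain ⟨r, hr, hrε⟩ := exists_mem_atomicCosts_le_of_mem_smul_convexHull (by linarith) hfK
    exact (csInf_le ⟨0, fun _ => nonneg_of_mem_atomicCosts⟩ hr).trans hrε
  · obtain ⟨φ, hφV, hφ, hφf⟩ := exists_polar_lt_apply_of_notMem_smul_convexHull hKV hKc hKne hKs
      (separatingLeft_restrict_of_forall_apply_eq_zero hKV hK) hf (by linarith) hfK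
    have hφL := le_csSup ⟨r₀, hLr₀⟩ ⟨φ, hφV, hφ, rfl⟩
    linarith [le_abs_self (B φ f)]

end ConvexDuality

section DualFunctions

variable {ι : Type*} [Fintype ι] [DecidableEq ι] {N : ℕ} [NeZero N]
  (ν : (I : Finset ι) → (I → ZMod N) → ℝ)

theorem wInner_comm (f g : (ι → ZMod N) → ℝ) : wInner ν f g = wInner ν g f := by
  simp only [wInner, mul_comm (f _)]

def wInnerBilin : LinearMap.BilinForm ℝ ((ι → ZMod N) → ℝ) :=
  LinearMap.mk₂ ℝ (wInner ν)
    (fun _ _ _ => by simp only [wInner, Pi.add_apply, add_mul, Finset.expect_add_distrib])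
    (fun _ _ _ => by simp only [wInner, Pi.smul_apply, smul_eq_mul, Finset.mul_expect, mul_assoc])
    (fun _ _ _ => by simp only [wInner, Pi.add_apply, mul_add, add_mul, Finset.expect_add_distrib])
    (fun _ _ _ => by
      simp only [wInner, Pi.smul_apply, smul_eq_mul, Finset.mul_expect, mul_assoc, mul_left_comm])

@[simp] theorem wInnerBilin_apply (f g : (ι → ZMod N) → ℝ) : wInnerBilin ν f g = wInner ν f g :=
  rfl

theorem card_filter_ne_const_false :
    #(univ.filter fun ω : ι → Bool => ω ≠ fun _ => false) = 2 ^ Fintype.card ι - 1 := by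
  rw [Finset.filter_ne' univ, Finset.card_erase_of_mem (mem_univ _), Finset.card_univ,
    Fintype.card_fun, Fintype.card_bool]

theorem dualFn_smul (c : ℝ) (g : (ι → ZMod N) → ℝ) :
    dualFn ν (c • g) = c ^ (2 ^ Fintype.card ι - 1) • dualFn ν g := by
  ext x
  simp only [dualFn, Pi.smul_apply, smul_eq_mul, Finset.prod_mul_distrib, Finset.prod_const,
    card_filter_ne_const_false, Finset.mul_expect, mul_assoc]

theorem dualFn_neg [Nonempty ι] (g : (ι → ZMod N) → ℝ) : dualFn ν (-g) = -dualFn ν g := by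
  have hodd : Odd (2 ^ Fintype.card ι - 1) :=
    Nat.Even.sub_odd Nat.one_le_two_pow ((Nat.even_pow' Fintype.card_ne_zero).mpr even_two)
      odd_one
  rw [← neg_one_smul ℝ g, dualFn_smul, hodd.neg_one_pow, neg_one_smul]

theorem continuous_dualFn : Continuous (dualFn ν) := by
  refine continuous_pi fun x => ?_
  simp only [dualFn, Finset.expect_eq_sum_div_card]
  fun_prop

theorem dualFn_mem_FT {Ω : Set (ι → ZMod N)} (hΩ : HasFaceStructure Ω) {g : (ι → ZMod N) → ℝ}
    (hg : g ∈ FT Ω) : dualFn ν g ∈ FT Ω := by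
  obtain ⟨ΩJ, hΩJ, rfl⟩ := hΩ
  intro x hx
  obtain ⟨J, hJ₀, hJ, hxJ⟩ : ∃ J, J ≠ ∅ ∧ J ≠ univ ∧ x ∉ ΩJ J := by simpa using hx
  -- The vertex `ω = 1_J` moves only coordinates in `J`, so `P_ω(x, y) ∉ Ω_J ⊇ Ω` for every `y`.
  have hω : (fun i => decide (i ∈ J)) ≠ fun _ => false := by
    obtain ⟨j, hj⟩ := Finset.nonempty_iff_ne_empty.mpr hJ₀
    exact fun h => by simpa [hj] using congrFun h j
  have hvanish : ∀ y, g (proj (fun i => decide (i ∈ J)) x y) = 0 := fun y =>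
    hg _ fun hmem => hxJ <| hΩJ J hJ₀ hJ _ x (fun i hi => by simp [proj, hi])
      (Set.mem_iInter₂.mp hmem J ⟨hJ₀, hJ⟩)
  refine Finset.expect_eq_zero fun y _ => ?_
  rw [Finset.prod_eq_zero (i := fun i => decide (i ∈ J)) (by simpa using hω) (hvanish y), zero_mul]

end DualFunctions

section SupportedFunctions

variable {ι : Type*} {N : ℕ} {Ω : Set (ι → ZMod N)} {νd : (ι → ZMod N) → ℝ}

theorem mem_FT_iff_mem_pi {f : (ι → ZMod N) → ℝ} :
    f ∈ FT Ω ↔ f ∈ Submodule.pi Ωᶜ fun _ => (⊥ : Submodule ℝ ℝ) :=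
  Iff.rfl

theorem isCompact_STset : IsCompact (STset Ω νd) := by
  refine (isCompact_univ_pi fun x => isCompact_Icc (a := -(νd x + 2)) (b := νd x + 2))
    |>.of_isClosed_subset ?_ fun g hg x _ => abs_le.mp (hg.2 x)
  simp only [STset, FT, Set.ofPred_and, Set.ofPred_forall]
  exact (isClosed_iInter fun x => isClosed_iInter fun _ =>
    isClosed_eq (continuous_apply x) continuous_const).inter
    (isClosed_iInter fun x => isClosed_le (continuous_apply x).abs continuous_const)

theorem zero_mem_STset (hνd : ∀ x, 0 ≤ νd x) : 0 ∈ STset Ω νd :=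
  ⟨fun _ _ => rfl, fun x => by simpa using (hνd x).trans (le_add_of_nonneg_right zero_le_two)⟩

theorem neg_mem_STset {g : (ι → ZMod N) → ℝ} (hg : g ∈ STset Ω νd) : -g ∈ STset Ω νd :=
  ⟨fun x hx => by simp [hg.1 x hx], fun x => by simpa using hg.2 x⟩

theorem exists_pos_smul_mem_STset [Fintype ι] [DecidableEq ι] [NeZero N] (hνd : ∀ x, 0 ≤ νd x)
    {u : (ι → ZMod N) → ℝ} (hu : u ∈ FT Ω) :
    ∃ c : ℝ, 0 < c ∧ c • u ∈ STset Ω νd := by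
  refine ⟨2 / (‖u‖ + 1), by positivity, fun x hx => by simp [hu x hx], fun x => ?_⟩
  have hux : |u x| ≤ ‖u‖ := by simpa using norm_le_pi_norm u x
  rw [Pi.smul_apply, smul_eq_mul, abs_mul, abs_of_pos (by positivity), div_mul_eq_mul_div,
    div_le_iff₀ (by positivity)]
  nlinarith [hνd x, norm_nonneg u]

end SupportedFunctions

section BACNorm

variable {ι : Type*} [Fintype ι] [DecidableEq ι] {N : ℕ} [NeZero N]
  {ν : (I : Finset ι) → (I → ZMod N) → ℝ} {Ω : Set (ι → ZMod N)} {νd : (ι → ZMod N) → ℝ}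

theorem BACnorm_le_iff {φ : (ι → ZMod N) → ℝ} {c : ℝ} (hc : 0 ≤ c) :
    BACnorm ν Ω νd φ ≤ c ↔ ∀ k ∈ dualFn ν '' STset Ω νd, |wInner ν φ k| ≤ c := by
  have hbdd : BddAbove ((fun g => |wInner ν φ (dualFn ν g)|) '' STset Ω νd) :=
    (isCompact_STset.image (((wInnerBilin ν φ).continuous_of_finiteDimensional.comp
      (continuous_dualFn ν)).abs)).bddAbove
  refine ⟨fun h => ?_, fun h => Real.sSup_le ?_ hc⟩
  · rintro _ ⟨g, hg, rfl⟩
    exact (le_csSup hbdd ⟨g, hg, rfl⟩).trans h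
  · rintro _ ⟨g, hg, rfl⟩
    exact h _ ⟨g, hg, rfl⟩

theorem eq_zero_of_forall_wInner_dualFn_eq_zero (hνd : ∀ x, 0 ≤ νd x)
    (hpos : ∀ f ∈ FT Ω, f ≠ 0 → 0 < wInner ν f (dualFn ν f)) {u : (ι → ZMod N) → ℝ}
    (hu : u ∈ FT Ω) (hK : ∀ k ∈ dualFn ν '' STset Ω νd, wInner ν u k = 0) : u = 0 := by
  by_contra hu0
  obtain ⟨c, hc, hcu⟩ := exists_pos_smul_mem_STset hνd hu
  have h := hK _ ⟨_, hcu, rfl⟩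
  rw [dualFn_smul, ← wInnerBilin_apply, map_smul, smul_eq_mul, wInnerBilin_apply] at h
  exact (mul_pos (pow_pos hc _) (hpos u hu hu0)).ne' h

end BACNorm

theorem dual_BACnorm_eq_general (N d : ℕ) [NeZero N] (hd : 1 ≤ d)
    (ν : (I : Finset (Fin d)) → (I → ZMod N) → ℝ)
    (νd : (Fin d → ZMod N) → ℝ) (hνd : ∀ x, 0 ≤ νd x)
    (Ω : Set (Fin d → ZMod N)) (hΩ : HasFaceStructure Ω)
    (hpos : ∀ f ∈ FT Ω, f ≠ 0 → 0 < wInner ν f (dualFn ν f))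
    (f : (Fin d → ZMod N) → ℝ) (hf : f ∈ FT Ω) :
    sSup {r : ℝ | ∃ φ ∈ FT Ω, BACnorm ν Ω νd φ ≤ 1 ∧ r = |wInner ν f φ|} =
      sInf {r : ℝ | ∃ (k : ℕ) (lam : Fin k → ℝ) (g : Fin k → ((Fin d → ZMod N) → ℝ)),
        (∀ i, g i ∈ STset Ω νd) ∧
        (f = fun x => ∑ i, lam i * dualFn ν (g i) x) ∧ r = ∑ i, |lam i|} := by
  have : Nonempty (Fin d) := ⟨⟨0, hd⟩⟩
  simp only [BACnorm_le_iff zero_le_one, wInner_comm ν f, mem_FT_iff_mem_pi, ← atomicCosts_image,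
    ← wInnerBilin_apply]
  refine sSup_polar_eq_sInf_atomicCosts ?_ (isCompact_STset.image (continuous_dualFn ν))
    ⟨_, 0, zero_mem_STset hνd, rfl⟩ ?_ (fun u hu hK => ?_) (mem_FT_iff_mem_pi.mp hf)
  · rintro _ ⟨g, hg, rfl⟩
    exact dualFn_mem_FT ν hΩ hg.1
  · rintro _ ⟨g, hg, rfl⟩
    exact ⟨-g, neg_mem_STset hg, dualFn_neg ν g⟩
  · exact eq_zero_of_forall_wInner_dualFn_eq_zero hνd hpos hu hK

/-- The dual BAC norm equals the infimum of `Σ|λ_i|` over representations `f = Σ λ_i Dg_i`. -/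
theorem dual_BACnorm_eq (N d : ℕ) [NeZero N] (hd : 1 ≤ d)
    (ν : (I : Finset (Fin d)) → (I → ZMod N) → ℝ)
    (hν : ∀ I : Finset (Fin d), I ≠ univ → ∀ z, 0 ≤ ν I z)
    (νd : (Fin d → ZMod N) → ℝ) (hνd : ∀ x, 0 ≤ νd x)
    (Ω : Set (Fin d → ZMod N)) (hΩ : HasFaceStructure Ω)
    (hprod : ∀ x ∈ Ω,
      0 < ∏ I ∈ univ.filter (fun I : Finset (Fin d) => I ≠ univ), ν I (fun i => x i.1))
    (hpos : ∀ f ∈ FT Ω, f ≠ 0 → 0 < wInner ν f (dualFn ν f))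
    (f : (Fin d → ZMod N) → ℝ) (hf : f ∈ FT Ω) :
    sSup {r : ℝ | ∃ φ ∈ FT Ω, BACnorm ν Ω νd φ ≤ 1 ∧ r = |wInner ν f φ|} =
      sInf {r : ℝ | ∃ (k : ℕ) (lam : Fin k → ℝ) (g : Fin k → ((Fin d → ZMod N) → ℝ)),
        (∀ i, g i ∈ STset Ω νd) ∧
        (f = fun x => ∑ i, lam i * dualFn ν (g i) x) ∧ r = ∑ i, |lam i|} :=
  dual_BACnorm_eq_general N d hd ν νd hνd Ω hΩ hpos f hf
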